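/- Let G be a finite simple graph with no isolated vertices that is (H1, H2, C6)-free and satisfies γt(G) = 2γ(G), and let S be an S(G)-set. Then the number of minimum dominating sets of G equals the product over v ∈ S of |T(v)|. -/

import Mathlib

open SimpleGraph

namespace TotalDom

variable {V : Type*}

/-- The closed neighborhood `N[v]` of a vertex. -/
def cnbr (G : SimpleGraph V) (v : V) : Set V := insert v (G.neighborSet v)

/-- `S` is a dominating set: every vertex outside `S` has a neighbor in `S`. -/
def IsDomSet (G : SimpleGraph V) (S : Set V) : Prop := ∀ v ∉ S, ∃ u ∈ S, G.Adj u v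

/-- `S` is a total dominating set: every vertex has a neighbor in `S`. -/
def IsTotalDomSet (G : SimpleGraph V) (S : Set V) : Prop := ∀ v : V, ∃ u ∈ S, G.Adj u v

/-- The domination number `γ(G)`. -/
noncomputable def domNum (G : SimpleGraph V) : ℕ :=
  sInf {n | ∃ S : Set V, IsDomSet G S ∧ S.ncard = n}

/-- The total domination number `γₜ(G)`. -/
noncomputable def totalDomNum (G : SimpleGraph V) : ℕ :=
  sInf {n | ∃ S : Set V, IsTotalDomSet G S ∧ S.ncard = n}

/-- A minimum dominating set (γ-set). -/
def IsMinDomSet (G : SimpleGraph V) (S : Set V) : Prop := IsDomSet G S ∧ S.ncard = domNum G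

/-- `S` is a packing: closed neighborhoods of distinct members are disjoint. -/
def IsPacking (G : SimpleGraph V) (S : Set V) : Prop :=
  S.Pairwise fun u v => Disjoint (cnbr G u) (cnbr G v)

/-- `M(v)`: neighbors of `v` having a neighbor outside `N[v]`. -/
def Mset (G : SimpleGraph V) (v : V) : Set V :=
  {u | G.Adj v u ∧ ∃ w, G.Adj u w ∧ w ∉ cnbr G v}

/-- `D(v)`: neighbors `u` of `v` that are not true twins of `v` with `N[u] ⊆ N[v]`. -/
def Dset (G : SimpleGraph V) (v : V) : Set V :=
  {u | G.Adj v u ∧ cnbr G u ≠ cnbr G v ∧ cnbr G u ⊆ cnbr G v}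

/-- `T(v)`: `v` together with its true twins. -/
def Tset (G : SimpleGraph V) (v : V) : Set V := {u | cnbr G u = cnbr G v}

/-- A non-isolated vertex `v` is special if no `u ∈ M(v)` satisfies `D(v) ⊆ N(u)`. -/
def Special (G : SimpleGraph V) (v : V) : Prop :=
  (G.neighborSet v).Nonempty ∧ ¬ ∃ u ∈ Mset G v, Dset G v ⊆ G.neighborSet u

/-- An `S(G)`-set: a set of special vertices containing exactly one vertex from each
true-twin equivalence class of special vertices. -/
def IsSGSet (G : SimpleGraph V) (S : Set V) : Prop :=
  (∀ u ∈ S, Special G u) ∧ ∀ v, Special G v → ∃! u, u ∈ S ∧ u ∈ Tset G v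

/-- `G` has no isolated vertices. -/
def NoIsolated (G : SimpleGraph V) : Prop := ∀ v : V, ∃ u, G.Adj v u

/-- `G` contains no induced copy of `H`. -/
def Free {α : Type*} (H : SimpleGraph α) (G : SimpleGraph V) : Prop := IsEmpty (H ↪g G)

/-- `H₁`: a 6-cycle plus one chord between vertices at distance two along the cycle. -/
def H1 : SimpleGraph (Fin 6) := cycleGraph 6 ⊔ fromEdgeSet {s(0, 2)}

/-- `H₂`: a 6-cycle `x₁x₂x₃x₄x₅x₆` plus the chords `x₂x₆` and `x₃x₅`. -/
def H2 : SimpleGraph (Fin 6) := cycleGraph 6 ⊔ fromEdgeSet {s(1, 5), s(2, 4)}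

/-- A leaf: a vertex of degree one. -/
def IsLeaf (G : SimpleGraph V) (v : V) : Prop := ∃! u, G.Adj v u

/-- A support vertex: a vertex adjacent to a leaf. -/
def IsSupport (G : SimpleGraph V) (v : V) : Prop := ∃ u, G.Adj v u ∧ IsLeaf G u

/-- `sup(G)`: the set of support vertices. -/
def supSet (G : SimpleGraph V) : Set V := {v | IsSupport G v}

/-!
If `γₜ(G) = 2γ(G)`, every minimum dominating set `D` is a packing: otherwise, adding one neighbour
for each vertex of `D` but one yields a total dominating set of size `2γ(G) - 1`. The same count
shows that every vertex `v ∈ D` is special, because the neighbours of `v` reaching outside `N[v]`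
through a fixed other cell `N[e]` can all be served by one neighbour of `e`: their traces on
`N(e) \ N[v]` form a chain, as two incomparable traces would produce an induced `C₆`, `H₁` or `H₂`.
A vertex of `D` dominating a special vertex `s` must then be a true twin of `s`, so the minimum
dominating sets are exactly the sets picking one vertex from each twin class `T(s)`, `s ∈ S`.
-/

section Basic

variable {G : SimpleGraph V} {D : Set V} {u v x : V}

lemma mem_cnbr : x ∈ cnbr G v ↔ x = v ∨ G.Adj v x := Iff.rfl

lemma self_mem_cnbr (G : SimpleGraph V) (v : V) : v ∈ cnbr G v := Or.inl rfl

lemma mem_cnbr_of_adj (h : G.Adj v x) : x ∈ cnbr G v := Or.inr h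

lemma mem_cnbr_comm : x ∈ cnbr G v ↔ v ∈ cnbr G x := by
  simp only [mem_cnbr, eq_comm, G.adj_comm]

lemma adj_of_mem_cnbr (h : x ∈ cnbr G v) (hne : x ≠ v) : G.Adj v x := h.resolve_left hne

lemma isDomSet_iff_forall_mem_cnbr : IsDomSet G D ↔ ∀ x, ∃ d ∈ D, x ∈ cnbr G d := by
  refine ⟨fun hD x => ?_, fun hD x hx => ?_⟩
  · by_cases hxD : x ∈ D
    · exact ⟨x, hxD, self_mem_cnbr G x⟩
    · obtain ⟨d, hd, hdx⟩ := hD x hxD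
      exact ⟨d, hd, mem_cnbr_of_adj hdx⟩
  · obtain ⟨d, hd, hxd⟩ := hD x
    exact ⟨d, hd, adj_of_mem_cnbr hxd (ne_of_mem_of_not_mem hd hx).symm⟩

lemma IsDomSet.exists_mem_cnbr (hD : IsDomSet G D) (x : V) : ∃ d ∈ D, x ∈ cnbr G d :=
  isDomSet_iff_forall_mem_cnbr.mp hD x

lemma exists_isMinDomSet (G : SimpleGraph V) : ∃ D, IsMinDomSet G D :=
  Nat.sInf_mem (s := {n | ∃ S : Set V, IsDomSet G S ∧ S.ncard = n})
    ⟨_, Set.univ, fun v hv => absurd (Set.mem_univ v) hv, rfl⟩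

lemma domNum_le (hD : IsDomSet G D) : domNum G ≤ D.ncard := Nat.sInf_le ⟨D, hD, rfl⟩

lemma totalDomNum_le (hD : IsTotalDomSet G D) : totalDomNum G ≤ D.ncard :=
  Nat.sInf_le ⟨D, hD, rfl⟩

lemma mem_Dset_or_cnbr_eq (hvx : G.Adj v x) (hx : x ∉ Mset G v) :
    x ∈ Dset G v ∨ cnbr G x = cnbr G v := by
  have hsub : cnbr G x ⊆ cnbr G v := by
    rintro y (rfl | hxy)
    · exact mem_cnbr_of_adj hvx
    · by_contra hy
      exact hx ⟨hvx, y, hxy, hy⟩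
  by_cases heq : cnbr G x = cnbr G v
  · exact Or.inr heq
  · exact Or.inl ⟨hvx, heq, hsub⟩

end Basic

section Packing

variable {G : SimpleGraph V} {D : Set V} {a u v x : V}

lemma IsPacking.eq_of_mem_cnbr (hP : IsPacking G D) {d₁ d₂ : V} (hd₁ : d₁ ∈ D) (hd₂ : d₂ ∈ D)
    (h₁ : x ∈ cnbr G d₁) (h₂ : x ∈ cnbr G d₂) : d₁ = d₂ := by
  by_contra hne
  exact Set.disjoint_left.mp (hP hd₁ hd₂ hne) h₁ h₂

lemma IsPacking.not_adj_of_mem_cnbr (hP : IsPacking G D) {e : V} (hv : v ∈ D) (he : e ∈ D)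
    (hev : e ≠ v) (hx : x ∈ cnbr G v) : ¬G.Adj e x := fun hex =>
  hev (hP.eq_of_mem_cnbr he hv (mem_cnbr_of_adj hex) hx)

variable [Finite V]

/-- Every vertex outside `N[a]` is totally dominated by the vertex `d ∈ D` dominating it, or by
`g d` if it is `d` itself. -/
lemma totalDomNum_lt_two_mul_ncard (hD : IsDomSet G D) (ha : a ∈ D) (g : V → V)
    (hg : ∀ d ∈ D, d ≠ a → G.Adj d (g d)) (w : V)
    (hcell : ∀ x ∈ cnbr G a, ∃ t ∈ insert w ((D \ {a}) ∪ g '' (D \ {a})), G.Adj t x) :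
    totalDomNum G < 2 * D.ncard := by
  set T := insert w ((D \ {a}) ∪ g '' (D \ {a}))
  have hT : IsTotalDomSet G T := by
    intro x
    obtain ⟨d, hd, hxd⟩ := hD.exists_mem_cnbr x
    rcases eq_or_ne d a with rfl | hda
    · exact hcell x hxd
    rcases eq_or_ne x d with rfl | hxd'
    · exact ⟨g x, Or.inr (Or.inr ⟨x, ⟨hd, hda⟩, rfl⟩), (hg x hd hda).symm⟩
    · exact ⟨d, Or.inr (Or.inl ⟨hd, hda⟩), adj_of_mem_cnbr hxd hxd'⟩
  have hcard : T.ncard ≤ 2 * (D \ {a}).ncard + 1 := calc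
    T.ncard ≤ ((D \ {a}) ∪ g '' (D \ {a})).ncard + 1 := Set.ncard_insert_le _ _
    _ ≤ (D \ {a}).ncard + (g '' (D \ {a})).ncard + 1 := by
      gcongr; exact Set.ncard_union_le _ _
    _ ≤ 2 * (D \ {a}).ncard + 1 := by
      have := Set.ncard_image_le (f := g) (Set.toFinite (D \ {a})); omega
  have hpos : 0 < D.ncard := (Set.ncard_pos (Set.toFinite D)).mpr ⟨a, ha⟩
  have := totalDomNum_le hT
  rw [Set.ncard_sdiff_singleton_of_mem ha] at hcard
  omega

theorem IsMinDomSet.isPacking (hiso : NoIsolated G) (h : totalDomNum G = 2 * domNum G)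
    (hD : IsMinDomSet G D) : IsPacking G D := by
  classical
  choose f hf using hiso
  intro a ha b hb hab
  by_contra hnd
  obtain ⟨c, hca, hcb⟩ := Set.not_disjoint_iff.mp hnd
  suffices ∃ g : V → V, (∀ d ∈ D, d ≠ a → G.Adj d (g d)) ∧
      ∃ t ∈ (D \ {a}) ∪ g '' (D \ {a}), G.Adj t a by
    obtain ⟨g, hg, t, ht, hta⟩ := this
    have hlt := totalDomNum_lt_two_mul_ncard hD.1 ha g hg a fun x hx => by
      rcases eq_or_ne x a with rfl | hxa
      · exact ⟨t, Or.inr ht, hta⟩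
      · exact ⟨a, Set.mem_insert _ _, adj_of_mem_cnbr hx hxa⟩
    rw [hD.2] at hlt
    omega
  by_cases hba : G.Adj b a
  · exact ⟨f, fun d _ _ => hf d, b, Or.inl ⟨hb, hab.symm⟩, hba⟩
  -- otherwise `c` is a common neighbour of `a` and `b`, and we let `g` send `b` to it
  have hca' : c ≠ a := by
    rintro rfl
    exact hba (adj_of_mem_cnbr hcb hab)
  have hcb' : c ≠ b := by
    rintro rfl
    exact hba (adj_of_mem_cnbr hca hab.symm).symm
  refine ⟨Function.update f b c, fun d _ _ => ?_, c, Or.inr ⟨b, ⟨hb, hab.symm⟩, by simp⟩,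
    (adj_of_mem_cnbr hca hca').symm⟩
  rcases eq_or_ne d b with rfl | hdb
  · simpa using adj_of_mem_cnbr hcb hcb'
  · simpa [hdb] using hf d

theorem IsMinDomSet.insert_diff_singleton (hD : IsMinDomSet G D) (hv : v ∈ D)
    (hsub : cnbr G v ⊆ cnbr G u) : IsMinDomSet G (insert u (D \ {v})) := by
  have hdom : IsDomSet G (insert u (D \ {v})) := by
    refine isDomSet_iff_forall_mem_cnbr.mpr fun x => ?_
    obtain ⟨d, hd, hxd⟩ := hD.1.exists_mem_cnbr x
    rcases eq_or_ne d v with rfl | hdv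
    · exact ⟨u, Set.mem_insert _ _, hsub hxd⟩
    · exact ⟨d, Set.mem_insert_of_mem _ ⟨hd, hdv⟩, hxd⟩
  refine ⟨hdom, le_antisymm ?_ (domNum_le hdom)⟩
  have hpos : 0 < D.ncard := (Set.ncard_pos (Set.toFinite D)).mpr ⟨v, hv⟩
  have := Set.ncard_insert_le u (D \ {v})
  rw [Set.ncard_sdiff_singleton_of_mem hv, hD.2] at this
  rw [hD.2] at hpos
  omega

/-- A vertex of a minimum dominating set can be replaced by any `u` with `N[v] ⊆ N[u]`; since the
new set is again a packing, `u` has no neighbour outside `N[v]`. -/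
theorem IsMinDomSet.cnbr_eq_of_subset (hiso : NoIsolated G) (h : totalDomNum G = 2 * domNum G)
    (hD : IsMinDomSet G D) (hv : v ∈ D) (hsub : cnbr G v ⊆ cnbr G u) :
    cnbr G u = cnbr G v := by
  have hP := hD.isPacking hiso h
  have hP' := (hD.insert_diff_singleton hv hsub).isPacking hiso h
  refine (Set.Subset.antisymm ?_ hsub)
  intro w hw
  by_contra hwv
  obtain ⟨e, he, hwe⟩ := hD.1.exists_mem_cnbr w
  have hev : e ≠ v := by rintro rfl; exact hwv hwe
  have hue : u ≠ e := by
    rintro rfl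
    exact hev (hP.eq_of_mem_cnbr he hv (hsub (self_mem_cnbr G v)) (self_mem_cnbr G v))
  exact hue (hP'.eq_of_mem_cnbr (Set.mem_insert _ _) (Set.mem_insert_of_mem _ ⟨he, hev⟩) hw hwe)

theorem IsMinDomSet.cnbr_eq_of_special (hiso : NoIsolated G) (h : totalDomNum G = 2 * domNum G)
    (hD : IsMinDomSet G D) (hv : Special G v) {d : V} (hd : d ∈ D) (hvd : v ∈ cnbr G d) :
    cnbr G d = cnbr G v := by
  have hP := hD.isPacking hiso h
  rcases eq_or_ne v d with rfl | hvd'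
  · rfl
  have hdv := adj_of_mem_cnbr hvd hvd'
  by_cases hM : d ∈ Mset G v
  · refine absurd ⟨d, hM, fun y hy => ?_⟩ hv.2
    -- `y ∈ D(v)` is dominated by the vertex of `D` dominating `v`, which is `d`
    obtain ⟨hvy, -, hyv⟩ := hy
    obtain ⟨e, he, hye⟩ := hD.1.exists_mem_cnbr y
    obtain rfl := hP.eq_of_mem_cnbr he hd (mem_cnbr_comm.mp (hyv (mem_cnbr_comm.mp hye))) hvd
    refine adj_of_mem_cnbr hye ?_
    rintro rfl
    obtain ⟨-, w, hyw, hwv⟩ := hM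
    exact hwv (hyv (mem_cnbr_of_adj hyw))
  · rcases mem_Dset_or_cnbr_eq hdv.symm hM with hDv | heq
    · exact (hD.cnbr_eq_of_subset hiso h hd hDv.2.2).symm
    · exact heq

lemma IsMinDomSet.eq_of_cnbr_eq (hiso : NoIsolated G) (h : totalDomNum G = 2 * domNum G)
    (hD : IsMinDomSet G D) {d₁ d₂ : V} (hd₁ : d₁ ∈ D) (hd₂ : d₂ ∈ D)
    (heq : cnbr G d₁ = cnbr G d₂) : d₁ = d₂ :=
  (hD.isPacking hiso h).eq_of_mem_cnbr hd₁ hd₂ (self_mem_cnbr G d₁) (heq ▸ self_mem_cnbr G d₁)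

end Packing

section Hexagon

variable {G : SimpleGraph V}

lemma H1_adj_iff (i j : Fin 6) :
    H1.Adj i j ↔ (cycleGraph 6).Adj i j ∨ (s(i, j) = s(0, 2) ∧ i ≠ j) := by
  simp [H1, fromEdgeSet_adj]

lemma H2_adj_iff (i j : Fin 6) :
    H2.Adj i j ↔ (cycleGraph 6).Adj i j ∨ ((s(i, j) = s(1, 5) ∨ s(i, j) = s(2, 4)) ∧ i ≠ j) := by
  simp [H2, fromEdgeSet_adj]

instance : DecidableRel H1.Adj := fun i j => decidable_of_iff _ (H1_adj_iff i j).symm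

instance : DecidableRel H2.Adj := fun i j => decidable_of_iff _ (H2_adj_iff i j).symm

lemma Free.false_of_adj_iff {α : Type*} {H : SimpleGraph α} (hG : Free H G) (a : α → V)
    (hsep : ∀ i j, i ≠ j → H.Adj i j ∨ ∃ k, ¬(H.Adj i k ↔ H.Adj j k))
    (ha : ∀ i j, G.Adj (a i) (a j) ↔ H.Adj i j) : False := by
  refine hG.false ⟨⟨a, fun i j hij => ?_⟩, fun {i j} => ha i j⟩
  by_contra hne
  rcases hsep i j hne with hadj | ⟨k, hk⟩
  · exact ((ha i j).mpr hadj).ne hij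
  · exact hk (by rw [← ha, ← ha, hij])

theorem not_hexagon (hH1 : Free H1 G) (hH2 : Free H2 G) (hC6 : Free (cycleGraph 6) G)
    {a0 a1 a2 a3 a4 a5 : V} (e01 : G.Adj a0 a1) (e12 : G.Adj a1 a2) (e23 : G.Adj a2 a3)
    (e34 : G.Adj a3 a4) (e45 : G.Adj a4 a5) (e50 : G.Adj a5 a0)
    (n02 : ¬G.Adj a0 a2) (n03 : ¬G.Adj a0 a3) (n04 : ¬G.Adj a0 a4) (n13 : ¬G.Adj a1 a3)
    (n14 : ¬G.Adj a1 a4) (n25 : ¬G.Adj a2 a5) (n35 : ¬G.Adj a3 a5) : False := by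
  set a : Fin 6 → V := ![a0, a1, a2, a3, a4, a5]
  have hadj : ∀ i j, G.Adj (a i) (a j) ↔ (cycleGraph 6).Adj i j ∨
      (s(i, j) = s(1, 5) ∧ G.Adj a1 a5) ∨ (s(i, j) = s(2, 4) ∧ G.Adj a2 a4) := by
    intro i j
    fin_cases i <;> fin_cases j <;>
      simp +decide [a, e01, e12, e23, e34, e45, e50, e01.symm, e12.symm, e23.symm,
        e34.symm, e45.symm, e50.symm, n02, n03, n04, n13, n14, n25, n35, G.adj_comm a2 a0,
        G.adj_comm a3 a0, G.adj_comm a4 a0, G.adj_comm a3 a1, G.adj_comm a4 a1,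
        G.adj_comm a5 a2, G.adj_comm a5 a3, G.adj_comm a5 a1, G.adj_comm a4 a2]
  -- the rotations by `5` and by `2` carry the chord `s(0, 2)` of `H₁` to `a1a5` and to `a2a4`
  by_cases c15 : G.Adj a1 a5 <;> by_cases c24 : G.Adj a2 a4
  · refine hH2.false_of_adj_iff a (by decide) fun i j => ?_
    simp only [hadj, c15, c24, and_true]
    revert i j; decide
  · refine hH1.false_of_adj_iff (fun i => a (i + 5)) (by decide) fun i j => ?_
    simp only [hadj, c15, c24, and_true, and_false, or_false]
    revert i j; decide
  · refine hH1.false_of_adj_iff (fun i => a (i + 2)) (by decide) fun i j => ?_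
    simp only [hadj, c15, c24, and_true, and_false, false_or]
    revert i j; decide
  · refine hC6.false_of_adj_iff a (by decide) fun i j => ?_
    simp only [hadj, c15, c24, and_false, or_false]

end Hexagon

lemma exists_mem_forall_of_chain {ι α : Type*} {s : Set ι} (hs : s.Finite) (hs₀ : s.Nonempty)
    {f : ι → Set α} (hf : ∀ i ∈ s, (f i).Nonempty)
    (hchain : ∀ i ∈ s, ∀ j ∈ s, f i ⊆ f j ∨ f j ⊆ f i) : ∃ x, ∀ i ∈ s, x ∈ f i := by
  obtain ⟨i, hi, hmin⟩ := hs.exists_minimalFor f s hs₀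
  obtain ⟨x, hx⟩ := hf i hi
  refine ⟨x, fun j hj => ?_⟩
  rcases hchain i hi j hj with hij | hji
  · exact hij hx
  · exact hmin hj hji hx

section Special

variable {G : SimpleGraph V} {D : Set V} {e v : V}

theorem IsPacking.subset_or_subset (hH1 : Free H1 G) (hH2 : Free H2 G)
    (hC6 : Free (cycleGraph 6) G) (hP : IsPacking G D) (hv : v ∈ D) (he : e ∈ D) (hev : e ≠ v)
    {z z' : V} (hz : G.Adj v z) (hz' : G.Adj v z') :
    {y | G.Adj z y ∧ G.Adj e y ∧ y ∉ cnbr G v} ⊆ {y | G.Adj z' y ∧ G.Adj e y ∧ y ∉ cnbr G v} ∨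
      {y | G.Adj z' y ∧ G.Adj e y ∧ y ∉ cnbr G v} ⊆ {y | G.Adj z y ∧ G.Adj e y ∧ y ∉ cnbr G v} := by
  by_contra! hne
  obtain ⟨⟨y, ⟨hzy, hey, hyv⟩, hz'y⟩, ⟨y', ⟨hz'y', hey', hy'v⟩, hzy'⟩⟩ :=
    And.imp Set.not_subset.mp Set.not_subset.mp hne
  have hne_e : ∀ {x}, x ∈ cnbr G v → ¬G.Adj x e := fun hx hxe =>
    hP.not_adj_of_mem_cnbr hv he hev hx hxe.symm
  exact not_hexagon hH1 hH2 hC6 hz hzy hey.symm hey' hz'y'.symm hz'.symm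
    (fun h => hyv (mem_cnbr_of_adj h)) (hne_e (self_mem_cnbr G v))
    (fun h => hy'v (mem_cnbr_of_adj h)) (hne_e (mem_cnbr_of_adj hz))
    (fun h => hzy' ⟨h, hey', hy'v⟩) (fun h => hz'y ⟨h.symm, hey, hyv⟩)
    (fun h => hne_e (mem_cnbr_of_adj hz') h.symm)

variable [Finite V]

theorem IsPacking.exists_common_nbr (hiso : NoIsolated G) (hH1 : Free H1 G) (hH2 : Free H2 G)
    (hC6 : Free (cycleGraph 6) G) (hP : IsPacking G D) (hv : v ∈ D) (he : e ∈ D) (hev : e ≠ v) :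
    ∃ y, G.Adj e y ∧ ∀ z, G.Adj v z →
      {y | G.Adj z y ∧ G.Adj e y ∧ y ∉ cnbr G v}.Nonempty → G.Adj z y := by
  set C := {z | G.Adj v z ∧ {y | G.Adj z y ∧ G.Adj e y ∧ y ∉ cnbr G v}.Nonempty}
  rcases C.eq_empty_or_nonempty with hC | hC
  · obtain ⟨y, hy⟩ := hiso e
    exact ⟨y, hy, fun z hz hzy => (Set.eq_empty_iff_forall_notMem.mp hC z ⟨hz, hzy⟩).elim⟩
  obtain ⟨y, hy⟩ := exists_mem_forall_of_chain (C.toFinite) hC (fun z hz => hz.2)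
    fun z hz z' hz' => hP.subset_or_subset hH1 hH2 hC6 hv he hev hz.1 hz'.1
  obtain ⟨z, hz⟩ := hC
  exact ⟨y, (hy z hz).2.1, fun z' hz' hz'y => (hy z' ⟨hz', hz'y⟩).1⟩

/-- If `u ∈ M(v)` had `D(v) ⊆ N(u)`, then `u` together with one suitable neighbour of each other
vertex of `D` would totally dominate `N[v]`. -/
theorem IsMinDomSet.special (hiso : NoIsolated G) (hH1 : Free H1 G) (hH2 : Free H2 G)
    (hC6 : Free (cycleGraph 6) G) (h : totalDomNum G = 2 * domNum G) (hD : IsMinDomSet G D)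
    (hv : v ∈ D) : Special G v := by
  have hP := hD.isPacking hiso h
  refine ⟨hiso v, ?_⟩
  rintro ⟨u, hu, hDu⟩
  choose! g hg hgz using fun e (he : e ∈ D) (hev : e ≠ v) =>
    hP.exists_common_nbr hiso hH1 hH2 hC6 hv he hev
  have hlt := totalDomNum_lt_two_mul_ncard hD.1 hv g hg u fun x hx => ?_
  · rw [hD.2] at hlt
    omega
  by_cases hux : G.Adj u x
  · exact ⟨u, Set.mem_insert _ _, hux⟩
  rcases eq_or_ne x v with rfl | hxv
  · exact ⟨u, Set.mem_insert _ _, hu.1.symm⟩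
  have hvx := adj_of_mem_cnbr hx hxv
  by_cases hxM : x ∈ Mset G v
  · obtain ⟨-, y, hxy, hyv⟩ := hxM
    obtain ⟨e, he, hye⟩ := hD.1.exists_mem_cnbr y
    have hev : e ≠ v := by
      rintro rfl
      exact hyv hye
    have hey : G.Adj e y := adj_of_mem_cnbr hye fun hye' =>
      hP.not_adj_of_mem_cnbr hv he hev hx (hye' ▸ hxy.symm)
    exact ⟨g e, Or.inr (Or.inr ⟨e, ⟨he, hev⟩, rfl⟩), (hgz e he hev x hvx ⟨y, hxy, hey, hyv⟩).symm⟩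
  · exfalso
    rcases mem_Dset_or_cnbr_eq hvx hxM with hxD | heq
    · exact hux (hDu hxD)
    · have hxu : x ≠ u := by
        rintro rfl
        exact hxM hu
      exact hux (adj_of_mem_cnbr (heq ▸ mem_cnbr_of_adj hu.1) hxu.symm).symm

end Special

section Transversal

variable {ι : Type*} {s : Set ι} {T : ι → Set V} {D : Set V}

def IsTransversal (s : Set ι) (T : ι → Set V) (D : Set V) : Prop :=
  (∀ d ∈ D, ∃ i ∈ s, d ∈ T i) ∧ ∀ i ∈ s, ∃! d, d ∈ D ∧ d ∈ T i

lemma injective_coe_pi_of_pairwiseDisjoint (hT : s.PairwiseDisjoint T) (c : ∀ i : s, T i) :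
    Function.Injective fun i => (c i : V) := fun i j hij =>
  Subtype.ext (hT.elim_set i.2 j.2 _ (c i).2 ((show (c i : V) = c j from hij) ▸ (c j).2))

lemma isTransversal_range (hT : s.PairwiseDisjoint T) (c : ∀ i : s, T i) :
    IsTransversal s T (Set.range fun i => (c i : V)) := by
  refine ⟨?_, fun i hi => ⟨c ⟨i, hi⟩, ⟨⟨_, rfl⟩, (c ⟨i, hi⟩).2⟩, ?_⟩⟩
  · rintro _ ⟨i, rfl⟩
    exact ⟨i, i.2, (c i).2⟩
  · rintro _ ⟨⟨j, rfl⟩, hj⟩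
    obtain rfl := hT.elim_set j.2 hi _ (c j).2 hj
    rfl

lemma IsTransversal.exists_eq_range (hD : IsTransversal s T D) :
    ∃ c : ∀ i : s, T i, Set.range (fun i => (c i : V)) = D := by
  choose c hc using fun i : s => (hD.2 i i.2).exists
  refine ⟨fun i => ⟨c i, (hc i).2⟩, Set.Subset.antisymm ?_ fun d hd => ?_⟩
  · rintro _ ⟨i, rfl⟩
    exact (hc i).1
  · obtain ⟨i, hi, hdi⟩ := hD.1 d hd
    exact ⟨⟨i, hi⟩, (hD.2 i hi).unique (hc _) ⟨hd, hdi⟩⟩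

lemma IsTransversal.ncard_eq (hT : s.PairwiseDisjoint T) (hD : IsTransversal s T D) :
    D.ncard = Nat.card s := by
  obtain ⟨c, rfl⟩ := hD.exists_eq_range
  exact Set.ncard_range_of_injective (injective_coe_pi_of_pairwiseDisjoint hT c)

theorem card_isTransversal (S : Finset ι) (hT : (S : Set ι).PairwiseDisjoint T) :
    Nat.card {D // IsTransversal (S : Set ι) T D} = ∏ i ∈ S, (T i).ncard := by
  have hbij : Function.Bijective fun c : (∀ i : (S : Set ι), T i) =>
      (⟨_, isTransversal_range hT c⟩ : {D // IsTransversal (S : Set ι) T D}) := by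
    refine ⟨fun c c' hcc' => funext fun i => ?_, fun ⟨D, hD⟩ => ?_⟩
    · have hrange : Set.range (fun j => (c j : V)) = Set.range (fun j => (c' j : V)) :=
        congrArg Subtype.val hcc'
      obtain ⟨j, hj⟩ : ∃ j, (c' j : V) = c i := hrange.subset (Set.mem_range_self i)
      obtain rfl : j = i := Subtype.ext (hT.elim_set j.2 i.2 _ (c' j).2 (hj ▸ (c i).2))
      exact Subtype.ext hj.symm
    · obtain ⟨c, hc⟩ := hD.exists_eq_range
      exact ⟨c, Subtype.ext hc⟩
  rw [← Nat.card_eq_of_bijective _ hbij, Nat.card_pi]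
  exact Finset.prod_coe_sort S fun i => (T i).ncard

end Transversal

section Counting

variable {G : SimpleGraph V} {S D D₀ : Set V}

lemma IsSGSet.pairwiseDisjoint_Tset (hS : IsSGSet G S) : S.PairwiseDisjoint (Tset G) := by
  intro s hs s' hs' hss'
  refine Set.disjoint_left.mpr fun x hxs hxs' => hss' ?_
  obtain ⟨t, -, ht⟩ := hS.2 s' (hS.1 s' hs')
  exact (ht s ⟨hs, hxs.symm.trans hxs'⟩).trans (ht s' ⟨hs', rfl⟩).symm

theorem IsTransversal.isMinDomSet (hD : IsTransversal S (Tset G) D)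
    (hS : S.PairwiseDisjoint (Tset G)) (hD₀ : IsMinDomSet G D₀)
    (hD₀S : IsTransversal S (Tset G) D₀) : IsMinDomSet G D := by
  refine ⟨isDomSet_iff_forall_mem_cnbr.mpr fun x => ?_, ?_⟩
  · obtain ⟨d₀, hd₀, hxd₀⟩ := hD₀.1.exists_mem_cnbr x
    obtain ⟨s, hs, hd₀s⟩ := hD₀S.1 d₀ hd₀
    obtain ⟨d, ⟨hd, hds⟩, -⟩ := hD.2 s hs
    exact ⟨d, hd, (hds.trans hd₀s.symm : cnbr G d = cnbr G d₀) ▸ hxd₀⟩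
  · rw [← hD₀.2, hD.ncard_eq hS, hD₀S.ncard_eq hS]

variable [Finite V]

theorem IsMinDomSet.isTransversal (hiso : NoIsolated G) (hH1 : Free H1 G) (hH2 : Free H2 G)
    (hC6 : Free (cycleGraph 6) G) (h : totalDomNum G = 2 * domNum G) (hS : IsSGSet G S)
    (hD : IsMinDomSet G D) : IsTransversal S (Tset G) D := by
  refine ⟨fun d hd => ?_, fun s hs => ?_⟩
  · obtain ⟨s, ⟨hs, hsd⟩, -⟩ := hS.2 d (hD.special hiso hH1 hH2 hC6 h hd)
    exact ⟨s, hs, hsd.symm⟩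
  · obtain ⟨d, hd, hsd⟩ := hD.1.exists_mem_cnbr s
    have hds := hD.cnbr_eq_of_special hiso h (hS.1 s hs) hd hsd
    exact ⟨d, ⟨hd, hds⟩, fun d' hd' => hD.eq_of_cnbr_eq hiso h hd'.1 hd (hd'.2.trans hds.symm)⟩

end Counting

/-- In an `(H₁,H₂,C₆)`-free graph `G` with no isolated vertices satisfying `γₜ(G) = 2γ(G)`,
the number of minimum dominating sets equals `∏_{v ∈ S} |T(v)|` for an `S(G)`-set `S`. -/
theorem stmt8 {V : Type*} [Fintype V] (G : SimpleGraph V) (hiso : NoIsolated G)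
    (hH1 : Free H1 G) (hH2 : Free H2 G) (hC6 : Free (cycleGraph 6) G)
    (h : totalDomNum G = 2 * domNum G)
    (S : Finset V) (hS : IsSGSet G ↑S) :
    Nat.card {D : Set V // IsMinDomSet G D} = ∏ v ∈ S, (Tset G v).ncard := by
  obtain ⟨D₀, hD₀⟩ := exists_isMinDomSet G
  have hdisj := hS.pairwiseDisjoint_Tset
  have hD₀S := hD₀.isTransversal hiso hH1 hH2 hC6 h hS
  have hiff : ∀ D, IsMinDomSet G D ↔ IsTransversal (S : Set V) (Tset G) D := fun D =>
    ⟨fun hD => hD.isTransversal hiso hH1 hH2 hC6 h hS, fun hD => hD.isMinDomSet hdisj hD₀ hD₀S⟩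
  rw [Nat.card_congr (Equiv.subtypeEquivRight hiff), card_isTransversal S hdisj]

end TotalDom
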